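/- arXiv:2302.03550 — 3 statements merged into one kernel-verified Lean document; each statement's English description precedes it below -/
import Mathlib

section
/- Let f : ℝ^d → ℝ be differentiable, let r > 0 and y ∈ ℝ^d. Assume the gradient of f is C_L-Lipschitz continuous on the ball B_r(y) and that f attains its infimum over B_r(y) at y. Then for all x in B_{r/2}(y), one has |∇f(x)|² ≤ 2 C_L (f(x) − f(y)). -/
/-!
Since `y` minimizes `f` on the ball, `∇f y = 0`, so the Lipschitz bound gives
`‖∇f x‖ ≤ C_L ‖x - y‖ < C_L r / 2`. Hence the gradient step `x - C_L⁻¹ ∇f x` stays in the ball,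
and the descent lemma `f b ≤ f a + ⟪∇f a, b - a⟫ + C_L / 2 ‖b - a‖²` shows that this step lowers
`f` by at least `‖∇f x‖² / (2 C_L)`; it cannot go below `f y`.
-/

open Metric InnerProductSpace
open scoped NNReal

section

variable {E : Type*} [NormedAddCommGroup E] [InnerProductSpace ℝ E] [CompleteSpace E]
  {f : E → ℝ} {C : ℝ≥0} {s : Set E}

theorem IsLocalMin.gradient_eq_zero {a : E} (h : IsLocalMin f a) : gradient f a = 0 := by
  rw [gradient, h.fderiv_eq_zero, map_zero]

theorem hasDerivAt_comp_add_smul {a v : E} {t : ℝ} (hf : DifferentiableAt ℝ f (a + t • v)) :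
    HasDerivAt (fun τ : ℝ => f (a + τ • v)) ⟪gradient f (a + t • v), v⟫_ℝ t := by
  have hline : HasDerivAt (fun τ : ℝ => a + τ • v) v t := by
    simpa using ((hasDerivAt_id t).smul_const v).const_add a
  rw [inner_gradient_left]
  exact hf.hasFDerivAt.comp_hasDerivAt t hline

theorem Convex.image_le_of_lipschitzOnWith_gradient (hs : Convex ℝ s)
    (hf : ∀ x ∈ s, DifferentiableAt ℝ f x) (hLip : LipschitzOnWith C (gradient f) s)
    {a b : E} (ha : a ∈ s) (hb : b ∈ s) :
    f b ≤ f a + ⟪gradient f a, b - a⟫_ℝ + C / 2 * ‖b - a‖ ^ 2 := by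
  set v := b - a
  have hseg : ∀ t ∈ Set.Icc (0 : ℝ) 1, a + t • v ∈ s := fun t ht => by
    simpa [v, AffineMap.lineMap_apply_module', add_comm] using
      hs.lineMap_mem ha hb ht
  -- `ψ` is `f` along the segment minus its quadratic model; it is antitone on `[0, 1]`.
  let ψ : ℝ → ℝ := fun t => f (a + t • v) - t * ⟪gradient f a, v⟫_ℝ - C / 2 * t ^ 2 * ‖v‖ ^ 2
  have hψ : ∀ t ∈ Set.Icc (0 : ℝ) 1, HasDerivAt ψ
      (⟪gradient f (a + t • v), v⟫_ℝ - ⟪gradient f a, v⟫_ℝ - C * t * ‖v‖ ^ 2) t := by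
    intro t ht
    have hquad := ((hasDerivAt_pow 2 t).const_mul ((C : ℝ) / 2)).mul_const (‖v‖ ^ 2)
    have hlin := (hasDerivAt_id' t).mul_const ⟪gradient f a, v⟫_ℝ
    refine (((hasDerivAt_comp_add_smul (hf _ (hseg t ht))).fun_sub hlin).fun_sub
      hquad).congr_deriv ?_
    push_cast
    ring
  have hψ_nonpos : ∀ t ∈ interior (Set.Icc (0 : ℝ) 1),
      ⟪gradient f (a + t • v), v⟫_ℝ - ⟪gradient f a, v⟫_ℝ - C * t * ‖v‖ ^ 2 ≤ 0 := by
    intro t ht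
    rw [interior_Icc] at ht
    have hlip : ‖gradient f (a + t • v) - gradient f a‖ ≤ C * (t * ‖v‖) := by
      simpa [norm_smul, abs_of_pos ht.1] using
        hLip.norm_sub_le (hseg t (Set.Ioo_subset_Icc_self ht)) ha
    rw [sub_nonpos]
    calc ⟪gradient f (a + t • v), v⟫_ℝ - ⟪gradient f a, v⟫_ℝ
        = ⟪gradient f (a + t • v) - gradient f a, v⟫_ℝ := (inner_sub_left ..).symm
      _ ≤ ‖gradient f (a + t • v) - gradient f a‖ * ‖v‖ := real_inner_le_norm ..
      _ ≤ C * (t * ‖v‖) * ‖v‖ := by gcongr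
      _ = C * t * ‖v‖ ^ 2 := by ring
  have hanti : AntitoneOn ψ (Set.Icc 0 1) :=
    antitoneOn_of_hasDerivWithinAt_nonpos (convex_Icc 0 1)
      (fun t ht => (hψ t ht).continuousAt.continuousWithinAt)
      (fun t ht => (hψ t (interior_subset ht)).hasDerivWithinAt) hψ_nonpos
  have h10 := hanti (Set.left_mem_Icc.2 zero_le_one) (Set.right_mem_Icc.2 zero_le_one) zero_le_one
  simp only [ψ, v, one_smul, zero_smul, add_zero, add_sub_cancel, one_mul, one_pow, zero_mul,
    sub_zero, mul_one, zero_pow two_ne_zero] at h10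
  linarith

theorem Convex.image_sub_inv_smul_gradient_le (hs : Convex ℝ s)
    (hf : ∀ x ∈ s, DifferentiableAt ℝ f x) (hLip : LipschitzOnWith C (gradient f) s)
    (hC : 0 < C) {x : E} (hx : x ∈ s) (hstep : x - (C : ℝ)⁻¹ • gradient f x ∈ s) :
    f (x - (C : ℝ)⁻¹ • gradient f x) ≤ f x - ‖gradient f x‖ ^ 2 / (2 * C) := by
  have hC' : (0 : ℝ) < C := hC
  have h := hs.image_le_of_lipschitzOnWith_gradient hf hLip hx hstep
  rw [sub_sub_cancel_left, inner_neg_right, real_inner_smul_right, real_inner_self_eq_norm_sq,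
    norm_neg, norm_smul, Real.norm_of_nonneg (inv_nonneg.2 hC'.le)] at h
  convert h using 1
  field_simp
  ring

end

theorem sub_inv_smul_mem_ball_of_norm_le {E : Type*} [SeminormedAddCommGroup E]
    [NormedSpace ℝ E] {C : ℝ} (hC : 0 < C) {r : ℝ} {x y g : E} (hx : x ∈ ball y (r / 2))
    (hg : ‖g‖ ≤ C * dist x y) : x - C⁻¹ • g ∈ ball y r := by
  rw [mem_ball, dist_eq_norm, sub_right_comm]
  calc ‖x - y - C⁻¹ • g‖
      ≤ ‖x - y‖ + C⁻¹ * ‖g‖ := by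
        simpa [norm_smul, abs_of_pos hC] using norm_sub_le (x - y) (C⁻¹ • g)
    _ ≤ ‖x - y‖ + ‖x - y‖ := by
        gcongr
        rwa [inv_mul_le_iff₀ hC, ← dist_eq_norm]
    _ < r := by rw [← dist_eq_norm]; linarith [mem_ball.1 hx]

theorem inverse_PL_inequality_general
    {d : ℕ} (f : EuclideanSpace ℝ (Fin d) → ℝ) (hf : Differentiable ℝ f)
    (C_L : NNReal) (r : ℝ) (y : EuclideanSpace ℝ (Fin d))
    (hLip : LipschitzOnWith C_L (gradient f) (ball y r))
    (hmin : ∀ x ∈ ball y r, f y ≤ f x) :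
    ∀ x ∈ ball y (r / 2), ‖gradient f x‖ ^ 2 ≤ 2 * (C_L : ℝ) * (f x - f y) := by
  intro x hx
  have hy : y ∈ ball y r := mem_ball_self (by linarith [pos_of_mem_ball hx])
  have hxr : x ∈ ball y r := ball_subset_ball (by linarith [pos_of_mem_ball hx]) hx
  have hy_crit : gradient f y = 0 :=
    IsLocalMin.gradient_eq_zero (Filter.eventually_of_mem (isOpen_ball.mem_nhds hy) hmin)
  have hgrad : ‖gradient f x‖ ≤ C_L * dist x y := by
    simpa [hy_crit, dist_eq_norm] using hLip.norm_sub_le hxr hy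
  rcases eq_zero_or_pos C_L with hC | hC
  · simp_all
  have hstep : x - (C_L : ℝ)⁻¹ • gradient f x ∈ ball y r :=
    sub_inv_smul_mem_ball_of_norm_le hC hx hgrad
  have hdescent := (convex_ball y r).image_sub_inv_smul_gradient_le (fun z _ => hf z) hLip hC
    hxr hstep
  have hfy := hmin _ hstep
  have hdecrease : ‖gradient f x‖ ^ 2 / (2 * C_L) ≤ f x - f y := by linarith
  rwa [div_le_iff₀ (by positivity), mul_comm] at hdecrease

theorem inverse_PL_inequality
    {d : ℕ} (f : EuclideanSpace ℝ (Fin d) → ℝ) (hf : Differentiable ℝ f)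
    (C_L : NNReal) (r : ℝ) (hr : 0 < r) (y : EuclideanSpace ℝ (Fin d))
    (hLip : LipschitzOnWith C_L (gradient f) (ball y r))
    (hmin : ∀ x ∈ ball y r, f y ≤ f x) :
    ∀ x ∈ ball y (r / 2), ‖gradient f x‖ ^ 2 ≤ 2 * (C_L : ℝ) * (f x - f y) :=
  inverse_PL_inequality_general f hf C_L r y hLip hmin
end

section
/- Let C_L ≥ L > 0 and μ > 0. Then there exist a, b > 0 with ab ≥ C_L such that μ − a + b > 0, aμ − a² + ab − 2L < 0, and C_L − (b/2)(μ + a − b) < 0. -/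
theorem feasibility_discrete
    (L C_L μ : ℝ) (hL : 0 < L) (hCL : L ≤ C_L) (hμ : 0 < μ) :
    ∃ a b : ℝ, 0 < a ∧ 0 < b ∧ a * b ≥ C_L ∧
      μ - a + b > 0 ∧ a * μ - a ^ 2 + a * b - 2 * L < 0 ∧
      C_L - b / 2 * (μ + a - b) < 0 := by
  set a : ℝ := μ + L / μ + 2 * C_L / μ + 1 with hadef
  have hCL0 : 0 < C_L := lt_of_lt_of_le hL hCL
  have ha : 0 < a := by
    have h1 : 0 < L / μ := by positivity
    have h2 : 0 < 2 * C_L / μ := by positivity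
    rw [hadef]; linarith
  set b : ℝ := a - μ + L / a with hbdef
  have hs : 0 < L / a := by positivity
  have haμ : a - μ = L / μ + 2 * C_L / μ + 1 := by ring
  have haμpos : 0 < a - μ := by rw [haμ]; positivity
  have hb : 0 < b := by rw [hbdef]; linarith
  have hLa : a * (L / a) = L := by field_simp
  have hLμ : μ * (L / μ) = L := by field_simp
  have hCμ : μ * (2 * C_L / μ) = 2 * C_L := by field_simp
  have hsμ : L / a ≤ μ := by
    rw [div_le_iff₀ ha]
    nlinarith [mul_pos hμ hμ]
  refine ⟨a, b, ha, hb, ?_, ?_, ?_, ?_⟩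
  · -- a * b ≥ C_L
    have : a * b = a * (a - μ) + L := by rw [hbdef]; rw [mul_add, hLa]
    rw [this, haμ]
    have h3 : a * (2 * C_L / μ) ≥ μ * (2 * C_L / μ) := by
      apply mul_le_mul_of_nonneg_right (by linarith) (by positivity)
    have h4 : 0 ≤ a * (L / μ) := by positivity
    nlinarith
  · -- μ - a + b > 0
    have : μ - a + b = L / a := by rw [hbdef]; ring
    linarith [this ▸ hs]
  · -- a * μ - a ^ 2 + a * b - 2 * L < 0
    have : a * μ - a ^ 2 + a * b = L := by
      rw [hbdef]; rw [mul_add, mul_sub, hLa]; ring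
    linarith
  · -- C_L - b / 2 * (μ + a - b) < 0
    have h5 : μ + a - b = 2 * μ - L / a := by rw [hbdef]; ring
    rw [h5]
    have hbge : b ≥ 2 * C_L / μ := by
      rw [hbdef, haμ]
      have : 0 < L / μ := by positivity
      linarith
    have h6 : b / 2 * (2 * μ - L / a) ≥ (2 * C_L / μ) / 2 * μ := by
      have hμs : μ ≤ 2 * μ - L / a := by linarith
      have : (2 * C_L / μ) / 2 * μ ≤ b / 2 * μ := by
        apply mul_le_mul_of_nonneg_right (by linarith) (le_of_lt hμ)
      have h7 : b / 2 * μ ≤ b / 2 * (2 * μ - L / a) := by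
        apply mul_le_mul_of_nonneg_left hμs (by linarith)
      linarith
    have h8 : (2 * C_L / μ) / 2 * μ = C_L := by field_simp
    -- need strict: b/2*(2μ - L/a) > C_L
    have hbstrict : b > 2 * C_L / μ := by
      rw [hbdef, haμ]
      have : 0 < L / μ := by positivity
      linarith
    have h9 : b / 2 * (2 * μ - L / a) > (2 * C_L / μ) / 2 * μ := by
      have hμs : μ ≤ 2 * μ - L / a := by linarith
      have h10 : (2 * C_L / μ) / 2 * μ < b / 2 * μ := by
        apply mul_lt_mul_of_pos_right (by linarith) hμ
      have h11 : b / 2 * μ ≤ b / 2 * (2 * μ - L / a) := by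
        apply mul_le_mul_of_nonneg_left hμs (by linarith)
      linarith
    linarith [h8 ▸ h9]
end

section
/- Let L, σ > 0, C_L ≥ L, and μ > C_L σ/(4L). Then there exist a, b > 0 with ab ≥ C_L such that μ − a + b > 0, (b/2)σ − a² + aμ + ab − 2L ≤ 0, and C_L − (b/2)(μ + a − b) ≤ 0. -/
theorem feasibility_continuous
    (L σ C_L μ : ℝ) (hL : 0 < L) (hσ : 0 < σ) (hCL : L ≤ C_L)
    (hμ : μ > C_L * σ / (4 * L)) :
    ∃ a b : ℝ, 0 < a ∧ 0 < b ∧ a * b ≥ C_L ∧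
      μ - a + b > 0 ∧
      b / 2 * σ - a ^ 2 + a * μ + a * b - 2 * L ≤ 0 ∧
      C_L - b / 2 * (μ + a - b) ≤ 0 := by
  have hCL0 : 0 < C_L := lt_of_lt_of_le hL hCL
  have hμ0 : 0 < μ := lt_trans (div_pos (mul_pos hCL0 hσ) (by linarith)) hμ
  have hσ' : σ ≠ 0 := hσ.ne'
  have hμ' : μ ≠ 0 := hμ0.ne'
  have hkey : C_L * σ < 4 * L * μ := by
    rw [gt_iff_lt, div_lt_iff₀ (by linarith)] at hμ
    linarith
  obtain ⟨b, hbdef⟩ : ∃ b : ℝ, b = 2 * L / σ + C_L / (2 * μ) := ⟨_, rfl⟩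
  have hb : 0 < b := by rw [hbdef]; positivity
  have hε₁ : 0 < 2 * L - b * σ / 2 := by
    have h1 : b * σ / 2 = L + C_L * σ / (4 * μ) := by
      rw [hbdef]; field_simp; ring
    have h2 : C_L * σ / (4 * μ) < L := by
      rw [div_lt_iff₀ (by linarith)]
      linarith
    linarith
  have hε₂ : 0 < b * μ - C_L := by
    have h1 : b * μ = 2 * L * μ / σ + C_L / 2 := by
      rw [hbdef]; field_simp
    have h2 : C_L / 2 < 2 * L * μ / σ := by
      rw [div_lt_div_iff₀ (by norm_num) hσ]
      linarith
    linarith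
  obtain ⟨δ, hδdef⟩ : ∃ d : ℝ,
      d = min (min ((2 * L - b * σ / 2) / (b + μ)) ((b * μ - C_L) / b)) (μ / 2) := ⟨_, rfl⟩
  have hδ0 : 0 < δ := by
    rw [hδdef]
    apply lt_min (lt_min _ _) (by linarith)
    · exact div_pos hε₁ (by linarith)
    · exact div_pos hε₂ hb
  have hδμ : δ ≤ μ / 2 := hδdef ▸ min_le_right _ _
  have hδ1 : δ * (b + μ) ≤ 2 * L - b * σ / 2 := by
    have : δ ≤ (2 * L - b * σ / 2) / (b + μ) :=
      hδdef ▸ le_trans (min_le_left _ _) (min_le_left _ _)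
    calc δ * (b + μ) ≤ ((2 * L - b * σ / 2) / (b + μ)) * (b + μ) := by
          apply mul_le_mul_of_nonneg_right this (by linarith)
      _ = 2 * L - b * σ / 2 := div_mul_cancel₀ _ (by linarith)
  have hδ2 : δ * b ≤ b * μ - C_L := by
    have : δ ≤ (b * μ - C_L) / b :=
      hδdef ▸ le_trans (min_le_left _ _) (min_le_right _ _)
    calc δ * b ≤ ((b * μ - C_L) / b) * b := by
          apply mul_le_mul_of_nonneg_right this (by linarith)
      _ = b * μ - C_L := div_mul_cancel₀ _ hb.ne'
  refine ⟨b + μ - δ, b, by linarith, hb, ?_, by linarith, ?_, ?_⟩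
  · nlinarith [sq_nonneg b]
  · nlinarith [mul_nonneg (by linarith : (0:ℝ) ≤ b + μ - δ) hδ0.le,
      mul_le_mul_of_nonneg_right (by linarith : b + μ - δ ≤ b + μ) hδ0.le]
  · nlinarith [mul_nonneg hδ0.le hb.le]
end
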